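/- arXiv:2603.19419 — 6 statements merged into one kernel-verified Lean document; each statement's English description precedes it below -/
import Mathlib

section
/- Let γ be an ℓ-cover of a matroid M on a finite ground set, let F be a focal basis of γ (a basis of M with γ(F) = ℓ), and let G be a basis of M. Suppose A ⊆ F \ G and B ⊆ G \ F are such that (F \ A) ∪ B is a basis of M. Then γ(A) ≤ γ(B); moreover, if A ⊆ supp(γ) then B ⊆ supp(γ). -/
open Matroid

/-- The total weight `γ(F) = ∑_{i ∈ F} γ(i)` of a finite set `F` under `γ`. -/
noncomputable def setWt {α : Type*} [Fintype α] (γ : α → ℕ) (F : Set α) : ℕ :=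
  ∑ i ∈ F.toFinite.toFinset, γ i

/-- `γ` is an `ℓ`-cover of the family `𝒟` if `γ(F) ≥ ℓ` for every `F ∈ 𝒟`. -/
def IsCoverOn {α : Type*} [Fintype α] (𝒟 : Set (Set α)) (ℓ : ℕ) (γ : α → ℕ) : Prop :=
  ∀ F ∈ 𝒟, ℓ ≤ setWt γ F

/-! The inequality compares the focal basis `F` with the basis `(F \ A) ∪ B`, whose weight is at
least `ℓ = γ(F)`. For the support claim, a zero-weight `b ∈ B` could be exchanged, by the dual
basis exchange, against some `a ∈ A` to give a basis `F - a + b`; the inequality for this single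
exchange reads `γ a ≤ γ b = 0`, contradicting `a ∈ supp γ`. -/

section setWt

variable {α : Type*} [Fintype α] (γ : α → ℕ)

lemma setWt_union {S T : Set α} (h : Disjoint S T) :
    setWt γ (S ∪ T) = setWt γ S + setWt γ T := by
  classical
  unfold setWt
  rw [← Finset.sum_union (by simpa using h)]
  exact Finset.sum_congr (by ext; simp) fun _ _ => rfl

lemma setWt_singleton (a : α) : setWt γ {a} = γ a := by
  simp [setWt]

lemma setWt_sdiff_add {S A : Set α} (h : A ⊆ S) :
    setWt γ (S \ A) + setWt γ A = setWt γ S := by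
  rw [← setWt_union γ Set.disjoint_sdiff_left, Set.sdiff_union_of_subset h]

end setWt

lemma Matroid.IsBase.exists_insert_isBase_of_mem_sdiff {α : Type*} {M : Matroid α}
    {B B' : Set α} {f : α} (hB : M.IsBase B) (hB' : M.IsBase B') (hf : f ∈ B' \ B) :
    ∃ e ∈ B \ B', M.IsBase (insert f (B \ {e})) := by
  have hfE : f ∈ M.E := hB'.subset_ground hf.1
  obtain ⟨e, ⟨⟨heE, heB'⟩, he⟩, hbase⟩ := hB.compl_isBase_dual.exchange
    hB'.compl_isBase_dual ⟨⟨hfE, hf.2⟩, fun h => h.2 hf.1⟩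
  have heB : e ∈ B := by_contra fun heB => he ⟨heE, heB⟩
  refine ⟨e, ⟨heB, heB'⟩, ?_⟩
  convert hbase.compl_isBase_of_dual using 1
  have hBE := hB.subset_ground
  ext x
  grind

section FocalBasis

variable {α : Type*} [Fintype α] {M : Matroid α} {ℓ : ℕ} {γ : α → ℕ} {F A B : Set α}

lemma setWt_le_of_focal_of_isBase_sdiff_union (hcov : IsCoverOn {F | M.IsBase F} ℓ γ)
    (hFfocal : setWt γ F = ℓ) (hAF : A ⊆ F) (hBF : Disjoint B F)
    (hbase : M.IsBase ((F \ A) ∪ B)) : setWt γ A ≤ setWt γ B := by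
  have hsplit := setWt_sdiff_add γ hAF
  have hcov' := hcov _ hbase
  rw [setWt_union γ (hBF.mono_right Set.sdiff_subset).symm] at hcov'
  omega

lemma le_of_focal_of_isBase_insert_sdiff (hcov : IsCoverOn {F | M.IsBase F} ℓ γ)
    (hFfocal : setWt γ F = ℓ) {a b : α} (ha : a ∈ F) (hb : b ∉ F)
    (hbase : M.IsBase (insert b (F \ {a}))) : γ a ≤ γ b := by
  rw [← Set.union_singleton] at hbase
  simpa only [setWt_singleton] using setWt_le_of_focal_of_isBase_sdiff_union hcov hFfocal
    (Set.singleton_subset_iff.2 ha) (Set.disjoint_singleton_left.2 hb) hbase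

end FocalBasis

theorem stmt0_general {α : Type*} [Fintype α] (M : Matroid α)
    (ℓ : ℕ) (γ : α → ℕ) (hcov : IsCoverOn {F | M.IsBase F} ℓ γ)
    (F G : Set α) (hF : M.IsBase F) (hFfocal : setWt γ F = ℓ)
    (A B : Set α) (hA : A ⊆ F \ G) (hB : B ⊆ G \ F)
    (hbase : M.IsBase ((F \ A) ∪ B)) :
    setWt γ A ≤ setWt γ B ∧
      (A ⊆ Function.support γ → B ⊆ Function.support γ) := by
  have hAF : A ⊆ F := fun _ hx => (hA hx).1
  have hBF : Disjoint B F := Set.disjoint_left.2 fun _ hx => (hB hx).2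
  refine ⟨setWt_le_of_focal_of_isBase_sdiff_union hcov hFfocal hAF hBF hbase,
    fun hAsupp b hb => ?_⟩
  obtain ⟨a, ⟨haF, haH⟩, hexch⟩ := hF.exists_insert_isBase_of_mem_sdiff hbase
    ⟨Or.inr hb, (hB hb).2⟩
  have haA : a ∈ A := by_contra fun haA => haH (Or.inl ⟨haF, haA⟩)
  have hab := le_of_focal_of_isBase_insert_sdiff hcov hFfocal haF (hB hb).2 hexch
  exact Nat.pos_iff_ne_zero.1 ((Nat.pos_of_ne_zero (hAsupp haA)).trans_le hab)

/-- if `γ` is an `ℓ`-cover of a matroid `M`, `F` is a focal basis of `γ`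
(`M.Base F` and `γ(F) = ℓ`), `G` is a basis, `A ⊆ F \ G`, `B ⊆ G \ F`, and `(F \ A) ∪ B`
is a basis, then `γ(A) ≤ γ(B)`, and `A ⊆ supp γ` implies `B ⊆ supp γ`. -/
theorem stmt0 {α : Type*} [Fintype α] (M : Matroid α) (hE : M.E = Set.univ)
    (ℓ : ℕ) (γ : α → ℕ) (hcov : IsCoverOn {F | M.IsBase F} ℓ γ)
    (F G : Set α) (hF : M.IsBase F) (hFfocal : setWt γ F = ℓ) (hG : M.IsBase G)
    (A B : Set α) (hA : A ⊆ F \ G) (hB : B ⊆ G \ F)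
    (hbase : M.IsBase ((F \ A) ∪ B)) :
    setWt γ A ≤ setWt γ B ∧
      (A ⊆ Function.support γ → B ⊆ Function.support γ) :=
  stmt0_general M ℓ γ hcov F G hF hFfocal A B hA hB hbase
end

section
/- Let γ be a basic ℓ-cover of a matroid M on a finite ground set E. Then every non-loop element of M lies in a focal basis of γ: for every i ∈ E such that {i} is independent in M, there exists a basis F of M with i ∈ F and γ(F) = ℓ. -/
/-!
Lowering a basic cover `γ` by one at an element `j` with `γ j > 0` destroys the cover property,
so some basis `F` has weight below `ℓ` after lowering. That basis must contain `j` (otherwise its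
weight is unchanged), and it lost exactly one unit, so `γ(F) = ℓ`: it is a focal basis through `j`.
An element `i` with `γ i = 0` is handled by exchange: extend `{i}` to a basis inside `{i} ∪ F` for a
focal basis `F`; its weight is at most `γ(F) = ℓ`.
-/

open Matroid

/-- An `ℓ`-cover is basic if no pointwise-smaller distinct function is an `ℓ`-cover. -/
def IsBasicCoverOn {α : Type*} [Fintype α] (𝒟 : Set (Set α)) (ℓ : ℕ) (γ : α → ℕ) : Prop :=
  IsCoverOn 𝒟 ℓ γ ∧ ∀ γ' : α → ℕ, γ' ≤ γ → γ' ≠ γ → ¬ IsCoverOn 𝒟 ℓ γ'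

open Function

section setWt

variable {α : Type*} [Fintype α]

lemma setWt_mono (γ : α → ℕ) {F G : Set α} (h : F ⊆ G) : setWt γ F ≤ setWt γ G :=
  Finset.sum_le_sum_of_subset (Set.Finite.toFinset_subset_toFinset.mpr h)

lemma setWt_insert_le [DecidableEq α] (γ : α → ℕ) (i : α) (F : Set α) :
    setWt γ (insert i F) ≤ γ i + setWt γ F := by
  by_cases hi : i ∈ F
  · rw [Set.insert_eq_of_mem hi]
    exact Nat.le_add_left _ _
  · unfold setWt
    rw [Set.Finite.toFinset_insert' F.toFinite,
      Finset.sum_insert (by simpa using hi)]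

lemma setWt_update_of_notMem [DecidableEq α] (γ : α → ℕ) {j : α} (v : ℕ) {F : Set α}
    (hj : j ∉ F) : setWt (update γ j v) F = setWt γ F :=
  Finset.sum_update_of_notMem (by simpa using hj) γ v

lemma setWt_update_pred_add_one [DecidableEq α] (γ : α → ℕ) {j : α} (hγj : 0 < γ j)
    {F : Set α} (hj : j ∈ F) : setWt (update γ j (γ j - 1)) F + 1 = setWt γ F := by
  have hj' : j ∈ F.toFinite.toFinset := by simpa using hj
  unfold setWt
  rw [Finset.sum_update_of_mem hj', Finset.sum_eq_add_sum_sdiff_singleton_of_mem hj']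
  omega

end setWt

namespace IsBasicCoverOn

variable {α : Type*} [Fintype α] {𝒟 : Set (Set α)} {ℓ : ℕ} {γ : α → ℕ}

lemma exists_focal_mem_of_pos (hγ : IsBasicCoverOn 𝒟 ℓ γ) {j : α} (hγj : 0 < γ j) :
    ∃ F ∈ 𝒟, j ∈ F ∧ setWt γ F = ℓ := by
  classical
  set γ' := update γ j (γ j - 1)
  have hle : γ' ≤ γ := update_le_iff.mpr ⟨Nat.sub_le _ _, fun _ _ => le_rfl⟩
  have hne : γ' ≠ γ := update_ne_self_iff.mpr (by omega)
  obtain ⟨F, hF, hlt⟩ : ∃ F ∈ 𝒟, setWt γ' F < ℓ := by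
    simpa [IsCoverOn] using hγ.2 γ' hle hne
  have hjF : j ∈ F := by
    by_contra hjF
    rw [setWt_update_of_notMem γ _ hjF] at hlt
    exact (hγ.1 F hF).not_gt hlt
  have hdrop : setWt γ' F + 1 = setWt γ F := setWt_update_pred_add_one γ hγj hjF
  exact ⟨F, hF, hjF, le_antisymm (by omega) (hγ.1 F hF)⟩

lemma exists_focal (hγ : IsBasicCoverOn 𝒟 ℓ γ) (h𝒟 : 𝒟.Nonempty) :
    ∃ F ∈ 𝒟, setWt γ F = ℓ := by
  obtain ⟨F₀, hF₀⟩ := h𝒟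
  obtain hfocal | hlt := (hγ.1 F₀ hF₀).eq_or_lt
  · exact ⟨F₀, hF₀, hfocal.symm⟩
  obtain ⟨j, -, hγj⟩ : ∃ j ∈ F₀.toFinite.toFinset, γ j ≠ 0 :=
    Finset.exists_ne_zero_of_sum_ne_zero (Nat.ne_zero_of_lt hlt)
  obtain ⟨F, hF, -, hFℓ⟩ := hγ.exists_focal_mem_of_pos (Nat.pos_of_ne_zero hγj)
  exact ⟨F, hF, hFℓ⟩

end IsBasicCoverOn

theorem stmt4_general {α : Type*} [Fintype α] (M : Matroid α)
    (ℓ : ℕ) (γ : α → ℕ) (hbasic : IsBasicCoverOn {F | M.IsBase F} ℓ γ) :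
    ∀ i : α, M.Indep {i} → ∃ F, M.IsBase F ∧ i ∈ F ∧ setWt γ F = ℓ := by
  classical
  intro i hi
  obtain hγi | hγi := Nat.eq_zero_or_pos (γ i)
  · obtain ⟨F, hF, hFℓ⟩ := hbasic.exists_focal M.exists_isBase
    obtain ⟨B, hB, hiB, hBsub⟩ := hi.exists_isBase_subset_union_isBase hF
    refine ⟨B, hB, hiB rfl, le_antisymm ?_ (hbasic.1 B hB)⟩
    calc setWt γ B ≤ setWt γ (insert i F) := setWt_mono γ hBsub
      _ ≤ γ i + setWt γ F := setWt_insert_le γ i F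
      _ = ℓ := by rw [hγi, hFℓ, zero_add]
  · exact hbasic.exists_focal_mem_of_pos hγi

/-- if `γ` is a basic `ℓ`-cover of a matroid `M` on finite ground set, then every
non-loop element (i.e. `{i}` independent) lies in some focal basis of `γ`. -/
theorem stmt4 {α : Type*} [Fintype α] (M : Matroid α) (hE : M.E = Set.univ)
    (ℓ : ℕ) (γ : α → ℕ) (hbasic : IsBasicCoverOn {F | M.IsBase F} ℓ γ) :
    ∀ i : α, M.Indep {i} → ∃ F, M.IsBase F ∧ i ∈ F ∧ setWt γ F = ℓ :=
  stmt4_general M ℓ γ hbasic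
end

section
/- Let γ be a basic ℓ-cover of a matroid M on a finite ground set, let F and G be focal bases of γ, and let a ∈ ℕ. Then (F ∩ γ⁻¹(a)) ∪ (G \ γ⁻¹(a)) is again a focal basis of γ, and |F ∩ γ⁻¹(a)| = |G ∩ γ⁻¹(a)|. -/
open Matroid

/-!
Symmetric exchange between two focal bases swaps elements of equal weight: both exchanged bases
weigh at least `ℓ`, while together they weigh `γ(F) + γ(G) = 2ℓ`. Exchanging the elements of
`F ∩ γ⁻¹(a)` missing from `G` into `G` one at a time keeps `G` focal and leaves `G \ γ⁻¹(a)` and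
`|G ∩ γ⁻¹(a)|` unchanged. Once `F ∩ γ⁻¹(a) ⊆ G`, exchanging in the other direction shows
`G ∩ γ⁻¹(a) ⊆ F`, so `G` itself is `(F ∩ γ⁻¹(a)) ∪ (G \ γ⁻¹(a))`.
-/

open Set

theorem Matroid.IsBase.exists_symm_exchange {α : Type*} {M : Matroid α} {B₁ B₂ : Set α} {e : α}
    (hB₁ : M.IsBase B₁) (hB₂ : M.IsBase B₂) (he : e ∈ B₁ \ B₂) :
    ∃ f ∈ B₂ \ B₁, M.IsBase (insert f (B₁ \ {e})) ∧ M.IsBase (insert e (B₂ \ {f})) := by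
  have heE : e ∈ M.E := hB₁.subset_ground he.1
  -- a circuit and a cocircuit never meet in exactly one element
  obtain ⟨f, ⟨hfC, hfK⟩, hfe⟩ : ∃ f ∈ M.fundCircuit e B₂ ∩ M.fundCocircuit e B₁, f ≠ e :=
    ((hB₂.fundCircuit_isCircuit heE he.2).isCocircuit_inter_nontrivial
      (fundCocircuit_isCocircuit he.1 hB₁)
      ⟨e, mem_fundCircuit .., mem_fundCocircuit ..⟩).exists_ne e
  have hfB₂ : f ∈ B₂ := (M.fundCircuit_subset_insert e B₂ hfC).resolve_left hfe
  have hfB₁ : f ∉ B₁ := ((M.fundCocircuit_subset_insert_compl e B₁ hfK).resolve_left hfe).2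
  rw [hB₁.mem_fundCocircuit_iff_mem_fundCircuit, hB₁.indep.mem_fundCircuit_iff
    (by rw [hB₁.closure_eq]; exact hB₂.subset_ground hfB₂) hfB₁] at hfK
  rw [hB₂.indep.mem_fundCircuit_iff (by rw [hB₂.closure_eq]; exact heE) he.2] at hfC
  refine ⟨f, ⟨hfB₂, hfB₁⟩, hB₁.exchange_isBase_of_indep hfB₁ ?_,
    hB₂.exchange_isBase_of_indep he.2 ?_⟩
  · rwa [insert_sdiff_singleton_comm hfe]
  · rwa [insert_sdiff_singleton_comm hfe.symm]

section Weight

variable {α : Type*} [Fintype α] {γ : α → ℕ} {s : Set α} {a b : α}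

theorem setWt_eq_finsum_mem (γ : α → ℕ) (s : Set α) : setWt γ s = ∑ᶠ i ∈ s, γ i :=
  (finsum_mem_eq_finite_toFinset_sum γ s.toFinite).symm

theorem setWt_insert (h : a ∉ s) : setWt γ (insert a s) = γ a + setWt γ s := by
  simp only [setWt_eq_finsum_mem, finsum_mem_insert γ h s.toFinite]

theorem setWt_exchange (ha : a ∉ s) (hb : b ∈ s) :
    setWt γ (insert a (s \ {b})) + γ b = setWt γ s + γ a := by
  have hs : setWt γ s = γ b + setWt γ (s \ {b}) := by
    rw [← setWt_insert (fun h => h.2 rfl), insert_sdiff_singleton, insert_eq_of_mem hb]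
  rw [setWt_insert (fun h => ha h.1), hs]
  ring

end Weight

section Cover

variable {α : Type*} [Fintype α] {M : Matroid α} {ℓ : ℕ} {γ : α → ℕ} {F G : Set α}

theorem IsCoverOn.exists_focal_exchange (hcov : IsCoverOn {B | M.IsBase B} ℓ γ)
    (hF : M.IsBase F) (hFw : setWt γ F = ℓ) (hG : M.IsBase G) (hGw : setWt γ G = ℓ)
    {e : α} (he : e ∈ F \ G) :
    ∃ f ∈ G \ F, γ f = γ e ∧ M.IsBase (insert e (G \ {f})) ∧
      setWt γ (insert e (G \ {f})) = ℓ := by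
  obtain ⟨f, hf, hF', hG'⟩ := hF.exists_symm_exchange hG he
  -- both exchanged bases weigh at least `ℓ`, and together they weigh `γ(F) + γ(G) = 2ℓ`
  have := hcov _ hF'
  have := hcov _ hG'
  have := setWt_exchange (γ := γ) hf.2 he.1
  have := setWt_exchange (γ := γ) he.2 hf.1
  exact ⟨f, hf, by omega, hG', by omega⟩

theorem IsCoverOn.inter_preimage_subset_of_subset (hcov : IsCoverOn {B | M.IsBase B} ℓ γ)
    (hF : M.IsBase F) (hFw : setWt γ F = ℓ) (hG : M.IsBase G) (hGw : setWt γ G = ℓ)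
    {a : ℕ} (hFG : F ∩ γ ⁻¹' {a} ⊆ G) : G ∩ γ ⁻¹' {a} ⊆ F := by
  rintro e ⟨heG, hea⟩
  by_contra heF
  obtain ⟨f, hf, hfe, -⟩ := hcov.exists_focal_exchange hG hGw hF hFw ⟨heG, heF⟩
  exact hf.2 (hFG ⟨hf.1, hfe.trans hea⟩)

theorem IsCoverOn.focal_inter_preimage_union_sdiff (hcov : IsCoverOn {B | M.IsBase B} ℓ γ)
    (hF : M.IsBase F) (hFw : setWt γ F = ℓ) (hG : M.IsBase G) (hGw : setWt γ G = ℓ) (a : ℕ) :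
    (M.IsBase ((F ∩ γ ⁻¹' {a}) ∪ (G \ γ ⁻¹' {a})) ∧
      setWt γ ((F ∩ γ ⁻¹' {a}) ∪ (G \ γ ⁻¹' {a})) = ℓ) ∧
    (F ∩ γ ⁻¹' {a}).ncard = (G ∩ γ ⁻¹' {a}).ncard := by
  set A := γ ⁻¹' {a}
  obtain ⟨n, hn⟩ : ∃ n, ((F ∩ A) \ G).ncard = n := ⟨_, rfl⟩
  induction n generalizing G with
  | zero =>
    have hFG : F ∩ A ⊆ G := sdiff_eq_empty.1 ((ncard_eq_zero (toFinite _)).1 hn)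
    have hGA : G ∩ A = F ∩ A := subset_antisymm
      (subset_inter (hcov.inter_preimage_subset_of_subset hF hFw hG hGw hFG) inter_subset_right)
      (subset_inter hFG inter_subset_right)
    rw [← hGA, inter_union_sdiff]
    exact ⟨⟨hG, hGw⟩, rfl⟩
  | succ n ih =>
    obtain ⟨e, he⟩ : ((F ∩ A) \ G).Nonempty := nonempty_of_ncard_ne_zero (by omega)
    have ⟨⟨heF, heA⟩, heG⟩ := he
    obtain ⟨f, ⟨hfG, hfF⟩, hfe, hG', hG'w⟩ :=
      hcov.exists_focal_exchange hF hFw hG hGw ⟨heF, heG⟩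
    have hfA : f ∈ A := hfe.trans heA
    have hdiff : (F ∩ A) \ insert e (G \ {f}) = ((F ∩ A) \ G) \ {e} := by
      ext x; grind
    have hdiffA : insert e (G \ {f}) \ A = G \ A := by
      ext x; grind
    have hinterA : insert e (G \ {f}) ∩ A = insert e ((G ∩ A) \ {f}) := by
      ext x; grind
    have key := ih hG' hG'w (by rw [hdiff, ncard_sdiff_singleton_of_mem he, hn]; rfl)
    rwa [hdiffA, hinterA,
      ncard_exchange (fun h : e ∈ G ∩ A => heG h.1) (⟨hfG, hfA⟩ : f ∈ G ∩ A)] at key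

end Cover

theorem stmt6_general {α : Type*} [Fintype α] (M : Matroid α)
    (ℓ : ℕ) (γ : α → ℕ) (hbasic : IsBasicCoverOn {F | M.IsBase F} ℓ γ)
    (F G : Set α) (hF : M.IsBase F) (hFfocal : setWt γ F = ℓ)
    (hG : M.IsBase G) (hGfocal : setWt γ G = ℓ) (a : ℕ) :
    (M.IsBase ((F ∩ (γ ⁻¹' {a})) ∪ (G \ (γ ⁻¹' {a}))) ∧
      setWt γ ((F ∩ (γ ⁻¹' {a})) ∪ (G \ (γ ⁻¹' {a}))) = ℓ) ∧
    (F ∩ (γ ⁻¹' {a})).ncard = (G ∩ (γ ⁻¹' {a})).ncard :=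
  hbasic.1.focal_inter_preimage_union_sdiff hF hFfocal hG hGfocal a

/-- let `γ` be a basic `ℓ`-cover of a matroid `M`, `F` and `G` focal bases of `γ`,
and `a : ℕ`. Then `(F ∩ γ⁻¹(a)) ∪ (G \ γ⁻¹(a))` is again a focal basis of `γ`, and
`|F ∩ γ⁻¹(a)| = |G ∩ γ⁻¹(a)|`. -/
theorem stmt6 {α : Type*} [Fintype α] (M : Matroid α) (hE : M.E = Set.univ)
    (ℓ : ℕ) (γ : α → ℕ) (hbasic : IsBasicCoverOn {F | M.IsBase F} ℓ γ)
    (F G : Set α) (hF : M.IsBase F) (hFfocal : setWt γ F = ℓ)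
    (hG : M.IsBase G) (hGfocal : setWt γ G = ℓ) (a : ℕ) :
    (M.IsBase ((F ∩ (γ ⁻¹' {a})) ∪ (G \ (γ ⁻¹' {a}))) ∧
      setWt γ ((F ∩ (γ ⁻¹' {a})) ∪ (G \ (γ ⁻¹' {a}))) = ℓ) ∧
    (F ∩ (γ ⁻¹' {a})).ncard = (G ∩ (γ ⁻¹' {a})).ncard :=
  stmt6_general M ℓ γ hbasic F G hF hFfocal hG hGfocal a
end

section
/- Let γ be a basic ℓ-cover of a matroid M on a finite ground set E and let M(γ) be the focal matroid of γ. Let H ⊆ supp(γ) be an independent set of M(γ) with γ(H) = ℓ. Then deleting supp(γ) from the contraction M(γ) ⧸ H yields the restriction of M(γ) to E \ supp(γ): (M(γ) ⧸ H) ⧹ supp(γ) = M(γ) | (E \ supp(γ)). -/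
open Matroid

/-- Matroid deletion: `M ⧹ D` is the restriction of `M` to `M.E \ D`. -/
def mdel {α : Type*} (M : Matroid α) (D : Set α) : Matroid α := M ↾ (M.E \ D)

/-- Matroid contraction: `M ⧸ C = (M✶ ⧹ C)✶`. -/
def mcon {α : Type*} (M : Matroid α) (C : Set α) : Matroid α := (mdel M✶ C)✶

/-! Every basis of `M(γ)` has weight `ℓ`, and all of that weight sits on `supp γ`. A basis
extending `H` therefore meets `supp γ` exactly in `H`. Extending an independent set `I` avoiding
`supp γ` to a basis inside `I ∪ B` for such a basis `B` gives a basis meeting `supp γ` in a subset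
of `H` of full weight `ℓ`, i.e. in `H` itself; so `I ∪ H` is independent, which is precisely the
statement that contracting `H` does not change independence away from `supp γ`. -/

namespace Matroid

variable {α : Type*} {N : Matroid α} {H S : Set α}

lemma contract_delete_eq_restrict_of_union_indep (hH : N.Indep H) (hHS : H ⊆ S)
    (hunion : ∀ I, N.Indep I → Disjoint I S → N.Indep (I ∪ H)) :
    N ／ H ＼ S = N ↾ (N.E \ S) := by
  have hground : (N ／ H ＼ S).E = N.E \ S := by
    rw [delete_ground, contract_ground, Set.sdiff_sdiff, Set.union_eq_self_of_subset_left hHS]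
  refine ext_indep hground fun I hI ↦ ?_
  rw [hground, Set.subset_sdiff] at hI
  rw [delete_indep_iff, hH.contract_indep_iff, restrict_indep_iff, Set.subset_sdiff]
  exact ⟨fun h ↦ ⟨h.1.2.subset Set.subset_union_left, hI⟩,
    fun h ↦ ⟨⟨hI.2.mono_right hHS, hunion I h.1 hI.2⟩, hI.2⟩⟩

end Matroid

section Weight

variable {α : Type*} [Fintype α] {γ : α → ℕ} {A B : Set α}

lemma setWt_inter_support (γ : α → ℕ) (A : Set α) :
    setWt γ (A ∩ Function.support γ) = setWt γ A := by
  refine Finset.sum_subset (Set.Finite.toFinset_mono Set.inter_subset_left) fun x hxA hx ↦ ?_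
  simp only [Set.Finite.mem_toFinset] at hxA hx
  simpa using fun hγ ↦ hx ⟨hxA, hγ⟩

lemma eq_of_subset_of_setWt_le (hAB : A ⊆ B) (hB : B ⊆ Function.support γ)
    (hwt : setWt γ B ≤ setWt γ A) : A = B := by
  by_contra hne
  obtain ⟨x, hxB, hxA⟩ := Set.exists_of_ssubset (hAB.ssubset_of_ne hne)
  refine hwt.not_gt <| Finset.sum_lt_sum_of_subset (Set.Finite.toFinset_mono hAB) (i := x)
    (by simpa using hxB) (by simpa using hxA) (Nat.pos_of_ne_zero (hB hxB)) fun _ _ _ ↦ Nat.zero_le _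

end Weight

namespace Matroid

variable {α : Type*} [Fintype α] {N : Matroid α} {γ : α → ℕ} {ℓ : ℕ} {H B I : Set α}

lemma IsBase.inter_support_eq_of_subset (hwt : ∀ B, N.IsBase B → setWt γ B = ℓ)
    (hHS : H ⊆ Function.support γ) (hHwt : setWt γ H = ℓ) (hB : N.IsBase B) (hHB : H ⊆ B) :
    B ∩ Function.support γ = H := by
  refine (eq_of_subset_of_setWt_le (Set.subset_inter hHB hHS) Set.inter_subset_right ?_).symm
  rw [setWt_inter_support, hwt B hB, hHwt]

lemma Indep.union_indep_of_disjoint_support (hI : N.Indep I)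
    (hIS : Disjoint I (Function.support γ)) (hwt : ∀ B, N.IsBase B → setWt γ B = ℓ)
    (hH : N.Indep H) (hHS : H ⊆ Function.support γ) (hHwt : setWt γ H = ℓ) :
    N.Indep (I ∪ H) := by
  obtain ⟨B, hB, hHB⟩ := hH.exists_isBase_superset
  obtain ⟨B', hB', hIB', hB'IB⟩ := hI.exists_isBase_subset_union_isBase hB
  have hB'S : B' ∩ Function.support γ ⊆ H := by
    rw [← hB.inter_support_eq_of_subset hwt hHS hHwt hHB]
    rintro x ⟨hxB', hxS⟩
    exact ⟨(hB'IB hxB').resolve_left fun hxI ↦ hIS.ne_of_mem hxI hxS rfl, hxS⟩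
  have hHB' : H ⊆ B' := by
    rw [← eq_of_subset_of_setWt_le hB'S hHS (by rw [setWt_inter_support, hwt B' hB', hHwt])]
    exact Set.inter_subset_left
  exact hB'.indep.subset (Set.union_subset hIB' hHB')

end Matroid

theorem stmt7_general {α : Type*} [Fintype α] (M : Matroid α)
    (ℓ : ℕ) (γ : α → ℕ)
    (Mγ : Matroid α) (hMγE : Mγ.E = Set.univ)
    (hMγ : ∀ F : Set α, Mγ.IsBase F ↔ (M.IsBase F ∧ setWt γ F = ℓ))
    (H : Set α) (hHsupp : H ⊆ Function.support γ)
    (hHind : Mγ.Indep H) (hHwt : setWt γ H = ℓ) :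
    mdel (mcon Mγ H) (Function.support γ) =
      Mγ ↾ ((Set.univ : Set α) \ Function.support γ) := by
  have hwt : ∀ B, Mγ.IsBase B → setWt γ B = ℓ := fun B hB ↦ ((hMγ B).mp hB).2
  change Mγ ／ H ＼ Function.support γ = _
  rw [← hMγE]
  exact contract_delete_eq_restrict_of_union_indep hHind hHsupp fun I hI hIS ↦
    hI.union_indep_of_disjoint_support hIS hwt hHind hHsupp hHwt

/-- let `γ` be a basic `ℓ`-cover of a matroid `M` on ground set `E`, `M(γ)` the
focal matroid of `γ` (a matroid whose bases are exactly the focal bases of `γ`), and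
`H ⊆ supp γ` an independent set of `M(γ)` with `γ(H) = ℓ`. Then
`(M(γ) ⧸ H) ⧹ supp γ = M(γ) | (E \ supp γ)`. -/
theorem stmt7 {α : Type*} [Fintype α] (M : Matroid α) (hE : M.E = Set.univ)
    (ℓ : ℕ) (γ : α → ℕ) (hbasic : IsBasicCoverOn {F | M.IsBase F} ℓ γ)
    (Mγ : Matroid α) (hMγE : Mγ.E = Set.univ)
    (hMγ : ∀ F : Set α, Mγ.IsBase F ↔ (M.IsBase F ∧ setWt γ F = ℓ))
    (H : Set α) (hHsupp : H ⊆ Function.support γ)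
    (hHind : Mγ.Indep H) (hHwt : setWt γ H = ℓ) :
    mdel (mcon Mγ H) (Function.support γ) =
      Mγ ↾ ((Set.univ : Set α) \ Function.support γ) :=
  stmt7_general M ℓ γ Mγ hMγE hMγ H hHsupp hHind hHwt
end

section
/- Let γ be a basic ℓ-cover of a matroid M on a finite ground set E with γ(i) ≤ 1 for all i ∈ E (γ squarefree), and let M(γ) be the focal matroid of γ. Then the restriction of M(γ) to the complement of the support of γ coincides with the restriction of M: M(γ) | (E \ supp(γ)) = M | (E \ supp(γ)). -/
open Matroid

lemma setWt_le_of_ne_zero_mem {α : Type*} [Fintype α] (γ : α → ℕ) {B F : Set α}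
    (h : ∀ j ∈ B, γ j ≠ 0 → j ∈ F) : setWt γ B ≤ setWt γ F :=
  Finset.sum_le_sum_of_ne_zero (by simpa using h)

/-- Exchange argument: a basis `B ⊇ I` with `|B \ F|` minimal has weight `γ(F)`, since otherwise
some `j ∈ B \ F` has `γ j ≠ 0` (so `j ∉ I`), and exchanging `j` for an element of `F` brings
`B` closer to `F`. -/
theorem Matroid.Indep.exists_isBase_superset_setWt_eq {α : Type*} [Fintype α] {M : Matroid α}
    {γ : α → ℕ} {I F : Set α} (hI : M.Indep I) (hIγ : ∀ i ∈ I, γ i = 0) (hF : M.IsBase F)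
    (hFmin : ∀ B, M.IsBase B → setWt γ F ≤ setWt γ B) :
    ∃ B, M.IsBase B ∧ I ⊆ B ∧ setWt γ B = setWt γ F := by
  obtain ⟨B, ⟨hB, hIB⟩, hBmin⟩ := Set.exists_min_image {B | M.IsBase B ∧ I ⊆ B}
    (fun B ↦ (B \ F).ncard) (Set.toFinite _) (hI.exists_isBase_superset)
  refine ⟨B, hB, hIB, le_antisymm ?_ (hFmin B hB)⟩
  by_contra! hlt
  obtain ⟨j, hjB, hjγ, hjF⟩ : ∃ j ∈ B, γ j ≠ 0 ∧ j ∉ F := by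
    by_contra! h
    exact hlt.not_ge (setWt_le_of_ne_zero_mem γ h)
  obtain ⟨e, heF, hB'⟩ := hB.exchange hF ⟨hjB, hjF⟩
  have hIB' : I ⊆ insert e (B \ {j}) := fun i hi ↦
    Set.mem_insert_of_mem _ ⟨hIB hi, fun hij ↦ hjγ (hIγ j (hij ▸ hi))⟩
  have hssub : insert e (B \ {j}) \ F ⊂ B \ F := by
    refine Set.ssubset_iff_subset_ne.2 ⟨?_, fun h ↦ ?_⟩
    · rintro x ⟨rfl | ⟨hxB, -⟩, hxF⟩
      · exact absurd heF.1 hxF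
      · exact ⟨hxB, hxF⟩
    · have : j ∈ insert e (B \ {j}) \ F := h ▸ ⟨hjB, hjF⟩
      rcases this.1 with rfl | ⟨-, hjj⟩
      · exact hjF heF.1
      · exact hjj rfl
  exact (Set.ncard_lt_ncard hssub).not_ge (hBmin _ ⟨hB', hIB'⟩)

theorem stmt8_general {α : Type*} [Fintype α] (M : Matroid α)
    (ℓ : ℕ) (γ : α → ℕ) (hbasic : IsBasicCoverOn {F | M.IsBase F} ℓ γ)
    (Mγ : Matroid α)
    (hMγ : ∀ F : Set α, Mγ.IsBase F ↔ (M.IsBase F ∧ setWt γ F = ℓ)) :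
    Mγ ↾ ((Set.univ : Set α) \ Function.support γ) =
      M ↾ ((Set.univ : Set α) \ Function.support γ) := by
  obtain ⟨F, hFγ⟩ := Mγ.exists_isBase
  obtain ⟨hF, hFw⟩ := (hMγ F).1 hFγ
  refine ext_indep rfl fun I hI ↦ ?_
  have hIγ : ∀ i ∈ I, γ i = 0 := fun i hi ↦ by simpa using (hI hi).2
  simp only [restrict_indep_iff]
  refine and_congr_left fun _ ↦ ⟨fun h ↦ ?_, fun h ↦ ?_⟩
  · obtain ⟨B, hB, hIB⟩ := h.exists_isBase_superset
    exact ((hMγ B).1 hB).1.indep.subset hIB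
  · obtain ⟨B, hB, hIB, hBw⟩ :=
      h.exists_isBase_superset_setWt_eq hIγ hF fun B hB ↦ hFw ▸ hbasic.1 B hB
    exact ((hMγ B).2 ⟨hB, hBw.trans hFw⟩).indep.subset hIB

/-- let `γ` be a squarefree basic `ℓ`-cover of a matroid `M` (i.e. `γ(i) ≤ 1`
for all `i`) and `M(γ)` the focal matroid of `γ`. Then
`M(γ) | (E \ supp γ) = M | (E \ supp γ)`. -/
theorem stmt8 {α : Type*} [Fintype α] (M : Matroid α) (hE : M.E = Set.univ)
    (ℓ : ℕ) (γ : α → ℕ) (hbasic : IsBasicCoverOn {F | M.IsBase F} ℓ γ)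
    (hsqfree : ∀ i : α, γ i ≤ 1)
    (Mγ : Matroid α) (hMγE : Mγ.E = Set.univ)
    (hMγ : ∀ F : Set α, Mγ.IsBase F ↔ (M.IsBase F ∧ setWt γ F = ℓ)) :
    Mγ ↾ ((Set.univ : Set α) \ Function.support γ) =
      M ↾ ((Set.univ : Set α) \ Function.support γ) :=
  stmt8_general M ℓ γ hbasic Mγ hMγ
end

section
/- Let M be a matroid on a finite ground set E, let μ : E → ℕ with A := supp(μ), and suppose x^μ ∉ J(M) (equivalently, some basis of M is disjoint from A). Then J(M) : x^μ = J(M ⧹ A), the cover ideal of the deletion of A from M; furthermore, for every ℓ ≥ 1, J(M ⧹ A)^{(ℓ)} = J(M)^{(ℓ)} : (x^μ)^ℓ, i.e., ⋂_{F basis of M ⧹ A} p_F^ℓ = (⋂_{F basis of M} p_F^ℓ) : x^{ℓ·μ}. -/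
open Matroid MvPolynomial

/-- The squarefree monomial `x_S = ∏_{i ∈ S} x_i`. -/
noncomputable def xS {α : Type*} [Fintype α] (K : Type*) [Field K] (S : Set α) :
    MvPolynomial α K :=
  ∏ i ∈ S.toFinite.toFinset, MvPolynomial.X i

/-- The monomial `x^γ = ∏ i, x_i ^ γ(i)`. -/
noncomputable def xPow {α : Type*} [Fintype α] (K : Type*) [Field K] (γ : α → ℕ) :
    MvPolynomial α K :=
  ∏ i : α, (MvPolynomial.X i : MvPolynomial α K) ^ γ i

/-- `p_S`: the ideal of `K[x_i : i ∈ α]` generated by the variables `x_i`, `i ∈ S`. -/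
noncomputable def pS {α : Type*} (K : Type*) [Field K] (S : Set α) :
    Ideal (MvPolynomial α K) :=
  Ideal.span (MvPolynomial.X '' S)

/-- The cover ideal `J(M) = ⋂_{F basis of M} p_F` of a matroid `M`. -/
noncomputable def coverIdeal {α : Type*} [Fintype α] (K : Type*) [Field K] (M : Matroid α) :
    Ideal (MvPolynomial α K) :=
  ⨅ F ∈ {F : Set α | M.IsBase F}, pS K F

/-- The `ℓ`-th symbolic power `J(M)^{(ℓ)} = ⋂_{F basis of M} p_F^ℓ` of the cover ideal. -/
noncomputable def symbPow {α : Type*} [Fintype α] (K : Type*) [Field K] (M : Matroid α)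
    (ℓ : ℕ) : Ideal (MvPolynomial α K) :=
  ⨅ F ∈ {F : Set α | M.IsBase F}, (pS K F) ^ ℓ

/-- `SF_ℓ(J(M))`: the ideal generated by the squarefree monomials of `J(M)^{(ℓ)}`, i.e. by the
monomials `x_S` with `|S ∩ F| ≥ ℓ` for every basis `F` of `M`. -/
noncomputable def SF {α : Type*} [Fintype α] (K : Type*) [Field K] (M : Matroid α)
    (ℓ : ℕ) : Ideal (MvPolynomial α K) :=
  Ideal.span {m : MvPolynomial α K |
    ∃ S : Set α, m = xS K S ∧ ∀ F : Set α, M.IsBase F → ℓ ≤ (S ∩ F).ncard}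

/-- A cocircuit of `M`: a minimal subset of the ground set meeting every basis of `M`. -/
def IsCocircuit {α : Type*} (M : Matroid α) (C : Set α) : Prop :=
  C ⊆ M.E ∧ (∀ F, M.IsBase F → (C ∩ F).Nonempty) ∧
    ∀ C' : Set α, C' ⊂ C → ∃ F, M.IsBase F ∧ C' ∩ F = ∅

/-! Membership in `p_F^ℓ` is decided monomial by monomial by the degree in the variables of `F`,
`Finsupp.weight (F.indicator 1)`. Colon ideals commute with intersections, and `p_F^ℓ : (x^μ)^ℓ`
is the whole ring when `F` meets `supp μ` (then `x^μ ∈ p_F`), and is `p_F^ℓ` itself when `F` misses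
`supp μ` (then multiplying by `x^μ` does not change `F`-degrees). The bases missing `supp μ` are
the bases of `M ⧹ supp μ` as soon as there is one, which is what `x^μ ∉ J(M)` says. -/

section MonomialIdeal

variable {α K : Type*} [Field K]

lemma weight_indicator_one_eq_zero_iff {F : Set α} {m : α →₀ ℕ} :
    Finsupp.weight (F.indicator 1) m = 0 ↔ ∀ i ∈ F, m i = 0 := by
  classical
  rw [Finsupp.weight_apply, Finsupp.sum, Finset.sum_eq_zero_iff]
  refine ⟨fun h i hi => ?_, fun h i _ => ?_⟩
  · by_contra hm
    exact hm (by simpa [hi] using h i (Finsupp.mem_support_iff.2 hm))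
  · by_cases hi : i ∈ F <;> simp [hi, h]

lemma mem_pS_iff {F : Set α} {p : MvPolynomial α K} :
    p ∈ pS K F ↔ ∀ m ∈ p.support, 1 ≤ Finsupp.weight (F.indicator 1) m := by
  simp only [pS, mem_ideal_span_X_image, Nat.one_le_iff_ne_zero, Ne,
    weight_indicator_one_eq_zero_iff, not_forall, exists_prop]

lemma le_weight_of_mem_pS_pow {F : Set α} {ℓ : ℕ} {p : MvPolynomial α K} (hp : p ∈ pS K F ^ ℓ) :
    ∀ m ∈ p.support, ℓ ≤ Finsupp.weight (F.indicator 1) m := by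
  classical
  induction ℓ generalizing p with
  | zero => simp
  | succ ℓ ih =>
    rw [pow_succ] at hp
    refine Submodule.mul_induction_on hp (fun a ha b hb m hm => ?_)
      fun a b ha hb m hm => (Finset.mem_union.1 (support_add hm)).elim (ha m) (hb m)
    obtain ⟨ma, hma, mb, hmb, rfl⟩ := Finset.mem_add.1 (support_mul a b hm)
    rw [map_add]
    exact add_le_add (ih ha ma hma) (mem_pS_iff.1 hb mb hmb)

lemma monomial_mem_pS_pow {F : Set α} {ℓ : ℕ} {m : α →₀ ℕ} (c : K)
    (hm : ℓ ≤ Finsupp.weight (F.indicator 1) m) : monomial m c ∈ pS K F ^ ℓ := by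
  classical
  induction ℓ generalizing m with
  | zero => simp
  | succ ℓ ih =>
    obtain ⟨i, hiF, hi⟩ : ∃ i ∈ F, m i ≠ 0 := by
      by_contra! h
      rw [weight_indicator_one_eq_zero_iff.2 h] at hm
      omega
    obtain ⟨m', rfl⟩ : ∃ m', m = m' + Finsupp.single i 1 :=
      le_iff_exists_add'.1 (Finsupp.single_le_iff.2 (Nat.one_le_iff_ne_zero.2 hi))
    rw [← mul_one c, ← monomial_mul, pow_succ, ← X]
    refine Ideal.mul_mem_mul (ih ?_) (Ideal.subset_span ⟨i, hiF, rfl⟩)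
    simpa [Finsupp.weight_single, hiF] using hm

lemma mem_pS_pow_iff {F : Set α} {ℓ : ℕ} {p : MvPolynomial α K} :
    p ∈ pS K F ^ ℓ ↔ ∀ m ∈ p.support, ℓ ≤ Finsupp.weight (F.indicator 1) m := by
  refine ⟨le_weight_of_mem_pS_pow, fun h => ?_⟩
  rw [← support_sum_monomial_coeff p]
  exact Ideal.sum_mem _ fun m hm => monomial_mem_pS_pow _ (h m hm)

lemma monomial_mem_pS {F : Set α} {ν : α →₀ ℕ} {i : α} (hi : i ∈ F) (hν : ν i ≠ 0) (c : K) :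
    monomial ν c ∈ pS K F := by
  rw [← pow_one (pS K F)]
  refine monomial_mem_pS_pow c (Nat.one_le_iff_ne_zero.2 fun h => hν ?_)
  exact weight_indicator_one_eq_zero_iff.1 h i hi

lemma pS_pow_colon_monomial_of_disjoint {F : Set α} {ν : α →₀ ℕ} (ℓ : ℕ)
    (h : Disjoint F ν.support) :
    (pS K F ^ ℓ).colon (Ideal.span {monomial ν (1 : K)}) = pS K F ^ ℓ := by
  refine le_antisymm (fun p hp => ?_) Ideal.le_colon
  have hν : Finsupp.weight (F.indicator 1) ν = 0 :=
    weight_indicator_one_eq_zero_iff.2 fun i hi =>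
      Finsupp.notMem_support_iff.1 (Set.disjoint_left.1 h hi)
  rw [Ideal.mem_colon_span_singleton, mem_pS_pow_iff] at hp
  refine mem_pS_pow_iff.2 fun m hm => ?_
  have hmν : m + ν ∈ (p * monomial ν 1).support := by
    rwa [mem_support_iff, coeff_mul_monomial, mul_one, ← mem_support_iff]
  simpa [hν] using hp _ hmν

end MonomialIdeal

lemma Ideal.pow_colon_pow_eq_top_of_mem {R : Type*} [CommSemiring R] {I : Ideal R} {x : R}
    (hx : x ∈ I) (ℓ : ℕ) : (I ^ ℓ).colon (Ideal.span {x ^ ℓ}) = ⊤ := by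
  simpa using Ideal.pow_mem_pow hx ℓ

section xPow

variable {α K : Type*} [Fintype α] [Field K]

lemma xPow_eq_monomial (μ : α → ℕ) :
    xPow K μ = monomial (Finsupp.equivFunOnFinite.symm μ) 1 := by
  rw [monomial_eq, C_1, one_mul, Finsupp.prod_fintype _ _ fun _ => pow_zero _]
  rfl

lemma xPow_mem_pS_of_not_disjoint {F : Set α} {μ : α → ℕ}
    (h : ¬Disjoint F (Function.support μ)) : xPow K μ ∈ pS K F := by
  obtain ⟨i, hiF, hiμ⟩ := Set.not_disjoint_iff.1 h
  rw [xPow_eq_monomial]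
  exact monomial_mem_pS (ν := Finsupp.equivFunOnFinite.symm μ) hiF hiμ 1

lemma pS_pow_colon_xPow_pow_of_disjoint {F : Set α} {μ : α → ℕ} (ℓ : ℕ)
    (h : Disjoint F (Function.support μ)) :
    (pS K F ^ ℓ).colon (Ideal.span {xPow K μ ^ ℓ}) = pS K F ^ ℓ := by
  rw [xPow_eq_monomial, monomial_pow, one_pow]
  refine pS_pow_colon_monomial_of_disjoint ℓ (h.mono_right fun i hi => ?_)
  simpa using Finsupp.support_smul hi

end xPow

lemma isBase_mdel_iff {α : Type*} {M : Matroid α} {A F : Set α}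
    (hA : ∃ B, M.IsBase B ∧ Disjoint B A) :
    (mdel M A).IsBase F ↔ M.IsBase F ∧ Disjoint F A := by
  obtain ⟨B, hB, hBA⟩ := hA
  rw [mdel, isBase_restrict_iff Set.sdiff_subset]
  refine ⟨fun h => ⟨?_, (Set.subset_sdiff.1 h.subset).2⟩, fun ⟨hF, hFA⟩ => ?_⟩
  · exact h.isBase_of_isBase_subset hB (Set.subset_sdiff.2 ⟨hB.subset_ground, hBA⟩)
  · exact hF.isBasis_ground.isBasis_subset (Set.subset_sdiff.2 ⟨hF.subset_ground, hFA⟩)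
      Set.sdiff_subset

section CoverIdeal

variable {α K : Type*} [Fintype α] [Field K]

lemma coverIdeal_eq_symbPow_one (M : Matroid α) : coverIdeal K M = symbPow K M 1 := by
  simp only [coverIdeal, symbPow, pow_one]

lemma exists_isBase_disjoint_of_xPow_notMem {M : Matroid α} {μ : α → ℕ}
    (h : xPow K μ ∉ coverIdeal K M) : ∃ B, M.IsBase B ∧ Disjoint B (Function.support μ) := by
  simp only [coverIdeal, Ideal.mem_iInf, Set.mem_ofPred_eq, not_forall] at h
  obtain ⟨B, hB, hμB⟩ := h
  exact ⟨B, hB, not_not.1 (mt xPow_mem_pS_of_not_disjoint hμB)⟩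

lemma symbPow_mdel_support_eq_colon {M : Matroid α} {μ : α → ℕ}
    (hB : ∃ B, M.IsBase B ∧ Disjoint B (Function.support μ)) (ℓ : ℕ) :
    symbPow K (mdel M (Function.support μ)) ℓ =
      (symbPow K M ℓ).colon (Ideal.span {xPow K μ ^ ℓ}) := by
  simp only [symbPow, Set.mem_ofPred_eq, Submodule.iInf_colon]
  refine iInf_congr fun F => ?_
  by_cases hF : Disjoint F (Function.support μ)
  · rw [pS_pow_colon_xPow_pow_of_disjoint ℓ hF]
    exact iInf_congr_Prop ((isBase_mdel_iff hB).trans (and_iff_left hF)) fun _ => rfl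
  · rw [Ideal.pow_colon_pow_eq_top_of_mem (xPow_mem_pS_of_not_disjoint hF)]
    simp [isBase_mdel_iff hB, hF]

end CoverIdeal

theorem stmt11_general {α : Type*} [Fintype α] (K : Type*) [Field K]
    (M : Matroid α) (μ : α → ℕ)
    (hnotmem : xPow K μ ∉ coverIdeal K M) :
    Submodule.colon (coverIdeal K M) (Ideal.span {xPow K μ}) =
      coverIdeal K (mdel M (Function.support μ)) ∧
    ∀ ℓ : ℕ, 1 ≤ ℓ →
      symbPow K (mdel M (Function.support μ)) ℓ =
        Submodule.colon (symbPow K M ℓ) (Ideal.span {(xPow K μ) ^ ℓ}) := by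
  have hB := exists_isBase_disjoint_of_xPow_notMem hnotmem
  refine ⟨?_, fun ℓ _ => symbPow_mdel_support_eq_colon hB ℓ⟩
  simpa only [coverIdeal_eq_symbPow_one, pow_one] using (symbPow_mdel_support_eq_colon hB 1).symm

/-- if `μ : E → ℕ` has support `A` and `x^μ ∉ J(M)`, then
`J(M) : x^μ = J(M ⧹ A)`, and for every `ℓ ≥ 1`,
`J(M ⧹ A)^{(ℓ)} = J(M)^{(ℓ)} : (x^μ)^ℓ`. -/
theorem stmt11 {α : Type*} [Fintype α] (K : Type*) [Field K]
    (M : Matroid α) (hE : M.E = Set.univ) (μ : α → ℕ)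
    (hnotmem : xPow K μ ∉ coverIdeal K M) :
    Submodule.colon (coverIdeal K M) (Ideal.span {xPow K μ}) =
      coverIdeal K (mdel M (Function.support μ)) ∧
    ∀ ℓ : ℕ, 1 ≤ ℓ →
      symbPow K (mdel M (Function.support μ)) ℓ =
        Submodule.colon (symbPow K M ℓ) (Ideal.span {(xPow K μ) ^ ℓ}) :=
  stmt11_general K M μ hnotmem
end
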